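/- arXiv:2502.11672 — 3 statements merged into one kernel-verified Lean document; each statement's English description precedes it below -/
import Mathlib

section
/- Let u < v be reals and let f : [u, v] → ℝ be twice continuously differentiable and convex on [u, v], and set M = sup_{x ∈ [u,v]} f″(x) and h = v − u. Then for every x ∈ [u, v], 0 ≤ f(x) − max( f(u) + f′(u)(x − u), f(v) + f′(v)(x − v) ) ≤ M·h². Consequently, for a uniform partition u = x_0 < x_1 < … < x_n = v with x_i = u + i·h_n and h_n = (v − u)/n, the piecewise tangent approximator p_n defined on each [x_i, x_{i+1}] as the maximum of the tangent lines at x_i and at x_{i+1} satisfies sup_{x ∈ [u,v]} |f(x) − p_n(x)| ≤ M·h_n². -/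
/-!
By convexity every tangent line lies below the graph, so the error is nonnegative. Evaluating the
tangent at `x` at the left endpoint `a` bounds the error of the tangent at `a` by
`(f' x - f' a) (x - a) ≤ (f' b - f' a) (b - a)`, using that `f'` is monotone, and
`f' b - f' a ≤ M (b - a)` because `f'' ≤ M`.
-/

open Set

section Tangent

variable {S : Set ℝ} {f f' : ℝ → ℝ}

theorem ConvexOn.add_mul_sub_le_of_hasDerivWithinAt (hconv : ConvexOn ℝ S f) {c x : ℝ}
    (hc : c ∈ S) (hx : x ∈ S) (hf' : HasDerivWithinAt f (f' c) S c) :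
    f c + f' c * (x - c) ≤ f x := by
  rcases lt_trichotomy c x with h | rfl | h
  · have hslope := hconv.le_slope_of_hasDerivWithinAt hc hx h hf'
    rw [slope_def_field, le_div_iff₀ (sub_pos.2 h)] at hslope
    linarith
  · simp
  · have hslope := hconv.slope_le_of_hasDerivWithinAt hx hc h hf'
    rw [slope_def_field, div_le_iff₀ (sub_pos.2 h)] at hslope
    linarith

theorem ConvexOn.monotoneOn_of_hasDerivWithinAt (hconv : ConvexOn ℝ S f)
    (hf' : ∀ x ∈ S, HasDerivWithinAt f (f' x) S x) : MonotoneOn f' S := by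
  intro a ha b hb hab
  rcases hab.eq_or_lt with rfl | h
  · rfl
  exact (hconv.le_slope_of_hasDerivWithinAt ha hb h (hf' a ha)).trans
    (hconv.slope_le_of_hasDerivWithinAt ha hb h (hf' b hb))

theorem ConvexOn.sub_max_tangent_mem_Icc (hconv : ConvexOn ℝ S f)
    (hf' : ∀ x ∈ S, HasDerivWithinAt f (f' x) S x) {a b x : ℝ} (ha : a ∈ S) (hb : b ∈ S)
    (hx : x ∈ Icc a b) :
    f x - max (f a + f' a * (x - a)) (f b + f' b * (x - b)) ∈
      Icc 0 ((f' b - f' a) * (b - a)) := by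
  have hxS : x ∈ S := hconv.1.ordConnected.out ha hb hx
  have tangent_le {c} (hc : c ∈ S) {y} (hy : y ∈ S) : f c + f' c * (y - c) ≤ f y :=
    hconv.add_mul_sub_le_of_hasDerivWithinAt hc hy (hf' c hc)
  have hmono := hconv.monotoneOn_of_hasDerivWithinAt hf'
  refine ⟨sub_nonneg.2 (max_le (tangent_le ha hxS) (tangent_le hb hxS)), ?_⟩
  have hslope : (f' x - f' a) * (x - a) ≤ (f' b - f' a) * (b - a) :=
    mul_le_mul (by linarith [hmono hxS hb hx.2]) (by linarith [hx.2])
      (by linarith [hx.1]) (by linarith [hmono ha hb (hx.1.trans hx.2)])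
  linarith [le_max_left (f a + f' a * (x - a)) (f b + f' b * (x - b)), tangent_le hxS ha]

end Tangent

theorem sub_le_mul_sub_of_hasDerivWithinAt_le {D : Set ℝ} (hD : Convex ℝ D) {g g' : ℝ → ℝ}
    {C : ℝ} (hg : ∀ x ∈ D, HasDerivWithinAt g (g' x) D x) (hle : ∀ x ∈ D, g' x ≤ C)
    {a b : ℝ} (ha : a ∈ D) (hb : b ∈ D) (hab : a ≤ b) :
    g b - g a ≤ C * (b - a) := by
  have hcont : ContinuousOn (fun x => C * x - g x) D :=
    (continuousOn_const.mul continuousOn_id).sub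
      fun x hx => (hg x hx).continuousWithinAt
  have hderiv : ∀ x ∈ interior D,
      HasDerivWithinAt (fun x => C * x - g x) (C - g' x) (interior D) x := fun x hx =>
    (((hasDerivWithinAt_id x _).const_mul C).sub
      ((hg x (interior_subset hx)).mono interior_subset)).congr_deriv (by simp)
  have hmono := monotoneOn_of_hasDerivWithinAt_nonneg hD hcont hderiv
    fun x hx => sub_nonneg.2 (hle x (interior_subset hx))
  linarith [hmono ha hb hab]

theorem exists_nat_lt_mem_Icc_add_one {n : ℕ} (hn : 0 < n) {t : ℝ} (ht : t ∈ Icc 0 (n : ℝ)) :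
    ∃ i < n, t ∈ Icc (i : ℝ) (i + 1) := by
  rcases ht.2.lt_or_eq with htn | rfl
  · exact ⟨⌊t⌋₊, (Nat.floor_lt ht.1).2 htn, Nat.floor_le ht.1, (Nat.lt_floor_add_one t).le⟩
  · refine ⟨n - 1, Nat.sub_lt hn one_pos, ?_⟩
    rw [Nat.cast_pred hn]
    constructor <;> simp

section UniformPartition

variable {u v : ℝ} (huv : u < v) {n : ℕ} (hn : 0 < n)
include huv hn

theorem uniform_node_mem_Icc {k : ℝ} (hk : k ∈ Icc 0 (n : ℝ)) :
    u + k * ((v - u) / n) ∈ Icc u v := by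
  have hh : 0 ≤ (v - u) / n := div_nonneg (sub_nonneg.2 huv.le) n.cast_nonneg
  have hnh : (n : ℝ) * ((v - u) / n) = v - u := mul_div_cancel₀ _ (by positivity)
  constructor
  · linarith [mul_nonneg hk.1 hh]
  · linarith [mul_le_mul_of_nonneg_right hk.2 hh]

theorem exists_mem_uniform_cell {x : ℝ} (hx : x ∈ Icc u v) :
    ∃ i < n, x ∈ Icc (u + i * ((v - u) / n)) (u + (i + 1) * ((v - u) / n)) := by
  have hh : 0 < (v - u) / n := div_pos (sub_pos.2 huv) (by positivity)
  have hnh : (n : ℝ) * ((v - u) / n) = v - u := mul_div_cancel₀ _ (by positivity)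
  obtain ⟨i, hi, hlo, hhi⟩ := exists_nat_lt_mem_Icc_add_one hn (t := (x - u) / ((v - u) / n))
    ⟨div_nonneg (sub_nonneg.2 hx.1) hh.le, by rw [div_le_iff₀ hh]; linarith [hx.2]⟩
  rw [le_div_iff₀ hh] at hlo
  rw [div_le_iff₀ hh] at hhi
  exact ⟨i, hi, by linarith, by linarith⟩

end UniformPartition

/-- Error bound for the piecewise tangent approximation of a twice continuously
differentiable convex function: on a single segment the error is at most
`M * h ^ 2`, and on a uniform partition with `n` segments the piecewise
tangent approximator is within `M * ((v - u) / n) ^ 2` of the function. -/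
theorem piecewise_tangent_error_bound
    (u v : ℝ) (huv : u < v) (f f' f'' : ℝ → ℝ)
    (hf' : ∀ x ∈ Set.Icc u v, HasDerivWithinAt f (f' x) (Set.Icc u v) x)
    (hf'' : ∀ x ∈ Set.Icc u v, HasDerivWithinAt f' (f'' x) (Set.Icc u v) x)
    (hf''c : ContinuousOn f'' (Set.Icc u v))
    (hconv : ConvexOn ℝ (Set.Icc u v) f)
    (M : ℝ) (hM : M = sSup (f'' '' Set.Icc u v)) :
    (∀ x ∈ Set.Icc u v,
        0 ≤ f x - max (f u + f' u * (x - u)) (f v + f' v * (x - v)) ∧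
        f x - max (f u + f' u * (x - u)) (f v + f' v * (x - v))
          ≤ M * (v - u) ^ 2) ∧
    (∀ n : ℕ, 0 < n → ∀ p : ℝ → ℝ,
      (∀ i : ℕ, i < n →
        ∀ x ∈ Set.Icc (u + (i : ℝ) * ((v - u) / n))
            (u + ((i : ℝ) + 1) * ((v - u) / n)),
          p x = max
            (f (u + (i : ℝ) * ((v - u) / n)) +
              f' (u + (i : ℝ) * ((v - u) / n)) *
                (x - (u + (i : ℝ) * ((v - u) / n))))
            (f (u + ((i : ℝ) + 1) * ((v - u) / n)) +
              f' (u + ((i : ℝ) + 1) * ((v - u) / n)) *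
                (x - (u + ((i : ℝ) + 1) * ((v - u) / n))))) →
      ∀ x ∈ Set.Icc u v, |f x - p x| ≤ M * ((v - u) / n) ^ 2) := by
  have hf''_le : ∀ x ∈ Icc u v, f'' x ≤ M := fun x hx => hM ▸
    le_csSup (isCompact_Icc.image_of_continuousOn hf''c).bddAbove (mem_image_of_mem f'' hx)
  have segment : ∀ a ∈ Icc u v, ∀ b ∈ Icc u v, ∀ x ∈ Icc a b,
      f x - max (f a + f' a * (x - a)) (f b + f' b * (x - b)) ∈ Icc 0 (M * (b - a) ^ 2) := by
    intro a ha b hb x hx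
    have herr := hconv.sub_max_tangent_mem_Icc hf' ha hb hx
    have hab : a ≤ b := hx.1.trans hx.2
    have hf'_sub := sub_le_mul_sub_of_hasDerivWithinAt_le (convex_Icc u v) hf'' hf''_le ha hb hab
    refine ⟨herr.1, herr.2.trans ?_⟩
    rw [sq, ← mul_assoc]
    exact mul_le_mul_of_nonneg_right hf'_sub (sub_nonneg.2 hab)
  refine ⟨fun x hx => segment u (left_mem_Icc.2 huv.le) v (right_mem_Icc.2 huv.le) x hx, ?_⟩
  intro n hn p hp x hx
  obtain ⟨i, hi, hxi⟩ := exists_mem_uniform_cell huv hn hx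
  have hi' : (i : ℝ) + 1 ≤ n := by exact_mod_cast hi
  have herr := segment _ (uniform_node_mem_Icc huv hn ⟨i.cast_nonneg, by linarith⟩)
    _ (uniform_node_mem_Icc huv hn ⟨by positivity, hi'⟩) x hxi
  rw [show u + ((i : ℝ) + 1) * ((v - u) / n) - (u + i * ((v - u) / n)) = (v - u) / n by ring]
    at herr
  rw [hp i hi x hxi, abs_of_nonneg herr.1]
  exact herr.2
end

section
/- Let x_0 < x_1 < … < x_n be reals and let p : [x_0, x_n] → ℝ be a continuous function such that for each i ∈ {1, …, n} there are constants c_i, v_i ∈ ℝ with p(x) = c_i + v_i·x for all x ∈ [x_{i−1}, x_i]. Set v_0 = 0. Then for every x ∈ [x_0, x_n], p(x) = c_1 + v_1·x_0 + Σ_{i=1}^{n} (v_i − v_{i−1})·max(x − x_{i−1}, 0). -/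
/-!
Induct on the number of pieces. Beyond its last breakpoint a ReLU sum is affine with slope the
sum of its coefficients; the increments `v (i + 1) - v i` telescope to the slope of the last
piece, and the ReLU switched on at the new breakpoint corrects it to the slope of the new piece.
-/

open Finset

theorem sum_mul_max_sub_eq_of_le {n : ℕ} {a x : ℕ → ℝ} {s t : ℝ}
    (hxs : ∀ i < n, x i ≤ s) (hst : s ≤ t) :
    ∑ i ∈ range n, a i * max (t - x i) 0 =
      ∑ i ∈ range n, a i * max (s - x i) 0 + (∑ i ∈ range n, a i) * (t - s) := by
  rw [sum_mul, ← sum_add_distrib]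
  refine sum_congr rfl fun i hi => ?_
  have hi := hxs i (mem_range.1 hi)
  rw [max_eq_left (by linarith), max_eq_left (by linarith)]
  ring

theorem eq_add_sum_mul_max_sub_of_slope {n : ℕ} {x : ℕ → ℝ} (hx : MonotoneOn x (Set.Iic n))
    {f : ℝ → ℝ} {v : ℕ → ℝ} (hv0 : v 0 = 0)
    (hf : ∀ i < n, ∀ t ∈ Set.Icc (x i) (x (i + 1)), f t = f (x i) + v (i + 1) * (t - x i)) :
    ∀ t ∈ Set.Icc (x 0) (x n),
      f t = f (x 0) + ∑ i ∈ range n, (v (i + 1) - v i) * max (t - x i) 0 := by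
  induction n with
  | zero =>
    rintro t ⟨ht0, ht1⟩
    rw [le_antisymm ht1 ht0, range_zero, sum_empty, add_zero]
  | succ n ih =>
    have hle : ∀ i ≤ n, x i ≤ x n := fun i hi =>
      hx (Set.mem_Iic.2 (hi.trans n.le_succ)) (Set.mem_Iic.2 n.le_succ) hi
    have ih := ih (hx.mono (Set.Iic_subset_Iic.2 n.le_succ)) fun i hi => hf i (by omega)
    rintro t ⟨ht0, ht1⟩
    rw [sum_range_succ]
    rcases le_total t (x n) with htn | hnt
    · rw [max_eq_right (by linarith), mul_zero, add_zero]
      exact ih t ⟨ht0, htn⟩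
    · have hfn := ih (x n) ⟨hle 0 n.zero_le, le_rfl⟩
      rw [hf n n.lt_succ_self t ⟨hnt, ht1⟩, hfn,
        sum_mul_max_sub_eq_of_le (fun i hi => hle i hi.le) hnt, sum_range_sub, hv0,
        max_eq_left (by linarith)]
      ring

theorem sum_Icc_one_eq_sum_range {M : Type*} [AddCommMonoid M] (g : ℕ → M) (n : ℕ) :
    ∑ i ∈ Icc 1 n, g i = ∑ i ∈ range n, g (i + 1) := by
  rw [range_eq_Ico, sum_Ico_add', zero_add, Ico_add_one_right_eq_Icc]

theorem piecewise_affine_as_relu_network_general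
    (n : ℕ) (hn : 0 < n) (x : ℕ → ℝ)
    (hx : ∀ i < n, x i < x (i + 1))
    (p : ℝ → ℝ)
    (c v : ℕ → ℝ) (hv0 : v 0 = 0)
    (haff : ∀ i, 1 ≤ i → i ≤ n →
      ∀ t ∈ Set.Icc (x (i - 1)) (x i), p t = c i + v i * t) :
    ∀ t ∈ Set.Icc (x 0) (x n),
      p t = c 1 + v 1 * x 0 +
        ∑ i ∈ Finset.Icc 1 n, (v i - v (i - 1)) * max (t - x (i - 1)) 0 := by
  have hmono : MonotoneOn x (Set.Iic n) := (strictMonoOn_Iic_of_lt_succ hx).monotoneOn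
  have haff_succ :
      ∀ i < n, ∀ t ∈ Set.Icc (x i) (x (i + 1)), p t = c (i + 1) + v (i + 1) * t :=
    fun i hi => haff (i + 1) (by omega) hi
  have hslope :
      ∀ i < n, ∀ t ∈ Set.Icc (x i) (x (i + 1)), p t = p (x i) + v (i + 1) * (t - x i) := by
    intro i hi t ht
    rw [haff_succ i hi t ht, haff_succ i hi (x i) ⟨le_rfl, (hx i hi).le⟩]
    ring
  have hp0 : p (x 0) = c 1 + v 1 * x 0 := haff_succ 0 hn (x 0) ⟨le_rfl, (hx 0 hn).le⟩
  intro t ht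
  rw [eq_add_sum_mul_max_sub_of_slope hmono hv0 hslope t ht, hp0, sum_Icc_one_eq_sum_range]
  simp only [Nat.add_sub_cancel]

/-- Any continuous piecewise affine function on an interval can be written
exactly as an affine combination of ReLU units with breakpoints at the
subinterval endpoints. -/
theorem piecewise_affine_as_relu_network
    (n : ℕ) (hn : 0 < n) (x : ℕ → ℝ)
    (hx : ∀ i < n, x i < x (i + 1))
    (p : ℝ → ℝ) (hp : ContinuousOn p (Set.Icc (x 0) (x n)))
    (c v : ℕ → ℝ) (hv0 : v 0 = 0)
    (haff : ∀ i, 1 ≤ i → i ≤ n →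
      ∀ t ∈ Set.Icc (x (i - 1)) (x i), p t = c i + v i * t) :
    ∀ t ∈ Set.Icc (x 0) (x n),
      p t = c 1 + v 1 * x 0 +
        ∑ i ∈ Finset.Icc 1 n, (v i - v (i - 1)) * max (t - x (i - 1)) 0 :=
  piecewise_affine_as_relu_network_general n hn x hx p c v hv0 haff
end

section
/- Let a < b be reals and let f : [a, b] → ℝ be differentiable and strictly concave on [a, b] (so that f′(a) > f′(b)). Define a′ = (f(a) − f(b) − (f′(a)·a − f′(b)·b)) / (f′(b) − f′(a)). Then a < a′ < b. -/
open Set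

/-- The difference of the two tangent lines is affine with slope `da - db > 0`, negative at `a`
and positive at `b`; the quotient below is its root. -/
theorem tangent_intersection_mem_Ioo {f : ℝ → ℝ} {a b da db : ℝ} (hab : a < b)
    (hda : slope f a b < da) (hdb : db < slope f a b) :
    (f a - f b - (da * a - db * b)) / (db - da) ∈ Ioo a b := by
  have hden : db - da < 0 := sub_neg.2 (hdb.trans hda)
  have hba : 0 < b - a := sub_pos.2 hab
  rw [slope_def_field, div_lt_iff₀ hba] at hda
  rw [slope_def_field, lt_div_iff₀ hba] at hdb
  constructor
  · rw [lt_div_iff_of_neg hden]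
    linarith
  · rw [div_lt_iff_of_neg hden]
    linarith

theorem tangent_intersection_interior_concave_general
    (a b : ℝ) (hab : a < b) (f f' : ℝ → ℝ)
    (hdiff : ∀ x ∈ Set.Icc a b, HasDerivWithinAt f (f' x) (Set.Icc a b) x)
    (hconc : StrictConcaveOn ℝ (Set.Icc a b) f)
    (a' : ℝ)
    (ha' : a' = (f a - f b - (f' a * a - f' b * b)) / (f' b - f' a)) :
    a < a' ∧ a' < b := by
  have ha : a ∈ Icc a b := left_mem_Icc.2 hab.le
  have hb : b ∈ Icc a b := right_mem_Icc.2 hab.le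
  rw [ha']
  exact tangent_intersection_mem_Ioo hab
    (hconc.slope_lt_of_hasDerivWithinAt ha hb hab (hdiff a ha))
    (hconc.lt_slope_of_hasDerivWithinAt ha hb hab (hdiff b hb))

/-- The intersection point of the tangent lines at the endpoints of a strictly
concave differentiable function lies strictly inside the interval. -/
theorem tangent_intersection_interior_concave
    (a b : ℝ) (hab : a < b) (f f' : ℝ → ℝ)
    (hdiff : ∀ x ∈ Set.Icc a b, HasDerivWithinAt f (f' x) (Set.Icc a b) x)
    (hconc : StrictConcaveOn ℝ (Set.Icc a b) f)
    (hslope : f' b < f' a)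
    (a' : ℝ)
    (ha' : a' = (f a - f b - (f' a * a - f' b * b)) / (f' b - f' a)) :
    a < a' ∧ a' < b :=
  tangent_intersection_interior_concave_general a b hab f f' hdiff hconc a' ha'
end
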